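/- Let a(u) = (uτ + v(u), v(u)·𝐥) and a′(u′) = (u′τ + v(u′), v(u′)·𝐥′) with v(u) = τ(1 − u²)/(2u), for 0 < u, u′ ≤ 1, unit vectors 𝐥, 𝐥′ ∈ S², and let t = (𝗍, 0) with 𝗍 ≥ 0. Then (a(u) + t − a′(u′))² = 𝗍² + 2τ² + 2𝗍(uτ + v(u)) − 2(𝗍 + uτ + v(u))(u′τ + v(u′)) + 2 v(u) v(u′)·(𝐥·𝐥′). In particular, if 𝐥·𝐥′ ≤ 0 and u′τ + v(u′) > τ + 𝗍, then (a(u)+t − a′(u′))² < 0, i.e. a(u)+t and a′(u′) are spacelike separated. -/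
import Mathlib


noncomputable section

open scoped RealInnerProductSpace

abbrev E3 := EuclideanSpace ℝ (Fin 3)

/-- The Minkowski quadratic form on ℝ⁴ ≅ ℝ × ℝ³. -/
def minkQ (x : ℝ × E3) : ℝ := x.1 ^ 2 - ‖x.2‖ ^ 2

/-- The coefficient `v(u) = τ(1 − u²)/(2u)`. -/
def vfun (τ u : ℝ) : ℝ := τ * (1 - u ^ 2) / (2 * u)

/-- The hyperbolic ray `a(u) = (uτ + v(u), v(u)·𝐥)`. -/
def rayPt (τ : ℝ) (l : E3) (u : ℝ) : ℝ × E3 := (u * τ + vfun τ u, vfun τ u • l)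

lemma norm_smul_sub_smul_sq (a b : ℝ) (l l' : E3) (hl : ‖l‖ = 1) (hl' : ‖l'‖ = 1) :
    ‖a • l - b • l'‖ ^ 2 = a ^ 2 + b ^ 2 - 2 * (a * b * ⟪l, l'⟫) := by
  rw [@norm_sub_sq_real, norm_smul, norm_smul, inner_smul_left, inner_smul_right]
  simp [hl, hl', mul_pow, sq_abs]
  ring

lemma key (τ u : ℝ) (hu : 0 < u) :
    (u * τ + vfun τ u) ^ 2 - vfun τ u ^ 2 = τ ^ 2 := by
  unfold vfun
  field_simp
  ring

lemma A_ge (τ u : ℝ) (hτ : 0 < τ) (hu : 0 < u) (hu1 : u ≤ 1) :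
    τ ≤ u * τ + vfun τ u := by
  unfold vfun
  have h : u * τ + τ * (1 - u ^ 2) / (2 * u) - τ = τ * (u - 1) ^ 2 / (2 * u) := by
    field_simp; ring
  nlinarith [div_nonneg (mul_nonneg hτ.le (sq_nonneg (u - 1))) (by linarith : (0:ℝ) ≤ 2 * u)]

/-- The key computation of Fact A.13: the Minkowski square of
`a(u) + t − a′(u′)` equals the stated expression, and is negative (spacelike
separation) when `𝐥·𝐥′ ≤ 0` and `u′τ + v(u′) > τ + 𝗍`. -/
theorem stmt16 (τ : ℝ) (hτ : 0 < τ) (l l' : E3) (hl : ‖l‖ = 1) (hl' : ‖l'‖ = 1)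
    (u u' : ℝ) (hu : u ∈ Set.Ioc (0 : ℝ) 1) (hu' : u' ∈ Set.Ioc (0 : ℝ) 1)
    (tt : ℝ) (htt : 0 ≤ tt) :
    minkQ (rayPt τ l u + ((tt, 0) : ℝ × E3) - rayPt τ l' u') =
      tt ^ 2 + 2 * τ ^ 2 + 2 * tt * (u * τ + vfun τ u)
        - 2 * (tt + u * τ + vfun τ u) * (u' * τ + vfun τ u')
        + 2 * vfun τ u * vfun τ u' * ⟪l, l'⟫ ∧
    (⟪l, l'⟫ ≤ 0 → τ + tt < u' * τ + vfun τ u' →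
      minkQ (rayPt τ l u + ((tt, 0) : ℝ × E3) - rayPt τ l' u') < 0) := by
  obtain ⟨hu0, hu1⟩ := hu
  obtain ⟨hu'0, hu'1⟩ := hu'
  set v := vfun τ u with hv
  set v' := vfun τ u' with hv'
  set A := u * τ + v with hA
  set A' := u' * τ + v' with hA'
  have hkey : A ^ 2 - v ^ 2 = τ ^ 2 := key τ u hu0
  have hkey' : A' ^ 2 - v' ^ 2 = τ ^ 2 := key τ u' hu'0
  have hAτ : τ ≤ A := A_ge τ u hτ hu0 hu1
  have hv0 : 0 ≤ v := by
    rw [hv]; unfold vfun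
    apply div_nonneg _ (by linarith)
    nlinarith [mul_nonneg (sub_nonneg.2 hu1) (by linarith : (0:ℝ) ≤ 1 + u)]
  have hv'0 : 0 ≤ v' := by
    rw [hv']; unfold vfun
    apply div_nonneg _ (by linarith)
    nlinarith [mul_nonneg (sub_nonneg.2 hu'1) (by linarith : (0:ℝ) ≤ 1 + u')]
  have heq : minkQ (rayPt τ l u + ((tt, 0) : ℝ × E3) - rayPt τ l' u') =
      tt ^ 2 + 2 * τ ^ 2 + 2 * tt * A - 2 * (tt + u * τ + v) * A' + 2 * v * v' * ⟪l, l'⟫ := by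
    have hn : ‖v • l - v' • l'‖ ^ 2 = v ^ 2 + v' ^ 2 - 2 * (v * v' * ⟪l, l'⟫) :=
      norm_smul_sub_smul_sq v v' l l' hl hl'
    simp only [minkQ, rayPt, Prod.add_def, Prod.sub_def, Prod.fst, Prod.snd, add_zero, ← hv, ← hv']
    rw [hn]
    linear_combination hkey + hkey' 
  refine ⟨heq, fun hip hA' => ?_⟩
  rw [heq]
  have h1 : 2 * v * v' * ⟪l, l'⟫ ≤ 0 := by
    have := mul_nonneg hv0 hv'0
    nlinarith
  have hA0 : 0 < tt + A := by linarith
  nlinarith [mul_lt_mul_of_pos_left hA' hA0, mul_le_mul_of_nonneg_left hAτ hτ.le,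
    mul_le_mul_of_nonneg_left hAτ htt]
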